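/- Let ζ : [0,∞) → ℝ be a continuous, bounded, positive function. Suppose there exist positive constants δ, A, C such that ζ(τ) ≤ A + C·∫₀^τ ζ(s+δ) ds for all τ > 0, and suppose C·δ·e < 1. Then for all τ ≥ 0, ζ(τ) ≤ A·(1 + (2π)^{-1/2}·(1 - Cδe)^{-1}·e^{τ/δ}). -/

import Mathlib

open Real MeasureTheory

lemma dg_factorial_lb (k : ℕ) (hk : 1 ≤ k) :
    Real.sqrt (2*π) * ((k:ℝ)/Real.exp 1)^k ≤ k.factorial := by
  have h1 : √π ≤ Stirling.stirlingSeq k := by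
    obtain ⟨m, rfl⟩ := Nat.exists_eq_add_of_le hk
    rw [add_comm]
    exact Stirling.stirlingSeq'_antitone.le_of_tendsto
      (Stirling.tendsto_stirlingSeq_sqrt_pi.comp (Filter.tendsto_add_atTop_nat 1)) m
  have h2 : (0:ℝ) < √(2*k) * ((k:ℝ)/Real.exp 1)^k := by
    have hkk : (0:ℝ) < (k:ℝ) := by exact_mod_cast hk
    positivity
  have h3 : √π * (√(2*k) * ((k:ℝ)/Real.exp 1)^k) ≤ k.factorial := by
    have := mul_le_mul_of_nonneg_right h1 h2.le
    rwa [Stirling.stirlingSeq, div_mul_cancel₀] at this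
    exact h2.ne'
  refine le_trans ?_ h3
  rw [← mul_assoc]
  have hp : (0:ℝ) ≤ ((k:ℝ)/Real.exp 1)^k := by positivity
  gcongr
  rw [show √π * √(2*(k:ℝ)) = √(π * (2*k)) by rw [Real.sqrt_mul pi_pos.le]]
  apply Real.sqrt_le_sqrt
  have : (1:ℝ) ≤ (k:ℝ) := by exact_mod_cast hk
  nlinarith [pi_pos]

lemma dg_two_pi_rpow : (2*π) ^ (-(1:ℝ)/2) = (Real.sqrt (2*π))⁻¹ := by
  rw [neg_div, Real.rpow_neg (by positivity), Real.sqrt_eq_rpow]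

lemma dg_term_bound (C δ τ : ℝ) (hC : 0 < C) (hδ : 0 < δ) (hτ : 0 ≤ τ) (k : ℕ) (hk : 1 ≤ k) :
    C^k / (k.factorial : ℝ) * (τ + k*δ)^k ≤
      (2*π) ^ (-(1:ℝ)/2) * (C*δ*Real.exp 1)^k * Real.exp (τ/δ) := by
  have hkR : (0:ℝ) < (k:ℝ) := by exact_mod_cast hk
  have ha : (τ + k*δ)^k ≤ (k*δ)^k * Real.exp (τ/δ) := by
    have h1 : τ + k*δ ≤ (k*δ) * Real.exp (τ/(δ*k)) := by
      have := Real.add_one_le_exp (τ/(δ*k))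
      calc τ + k*δ = (k*δ) * (τ/(δ*k) + 1) := by field_simp
        _ ≤ (k*δ) * Real.exp (τ/(δ*k)) := by
            apply mul_le_mul_of_nonneg_left this (by positivity)
    calc (τ + k*δ)^k ≤ ((k*δ) * Real.exp (τ/(δ*k)))^k := by
          apply pow_le_pow_left₀ (by positivity) h1
      _ = (k*δ)^k * Real.exp (τ/(δ*k)) ^ k := mul_pow _ _ _
      _ = (k*δ)^k * Real.exp (τ/δ) := by
          rw [← Real.exp_nat_mul]
          congr 1
          field_simp
  have hb : (k:ℝ)^k ≤ (k.factorial : ℝ) * Real.exp 1 ^ k / Real.sqrt (2*π) := by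
    have := dg_factorial_lb k hk
    rw [div_pow] at this
    have hsp : (0:ℝ) < Real.sqrt (2*π) := by positivity
    have he : (0:ℝ) < Real.exp 1 ^ k := by positivity
    rw [le_div_iff₀ hsp]
    calc (k:ℝ)^k * √(2*π) = √(2*π) * ((k:ℝ)^k / Real.exp 1 ^k) * Real.exp 1 ^ k := by
          field_simp
      _ ≤ (k.factorial:ℝ) * Real.exp 1 ^ k := by
          exact mul_le_mul_of_nonneg_right this he.le
  have hfac : (0:ℝ) < (k.factorial : ℝ) := by exact_mod_cast k.factorial_pos
  have hsp : (0:ℝ) < Real.sqrt (2*π) := by positivity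
  rw [dg_two_pi_rpow]
  calc C^k / (k.factorial : ℝ) * (τ + k*δ)^k
      ≤ C^k / (k.factorial : ℝ) * ((k*δ)^k * Real.exp (τ/δ)) := by
        apply mul_le_mul_of_nonneg_left ha (by positivity)
    _ = C^k * δ^k * (k:ℝ)^k / (k.factorial:ℝ) * Real.exp (τ/δ) := by
        rw [mul_pow]; field_simp
    _ ≤ C^k * δ^k * ((k.factorial : ℝ) * Real.exp 1 ^ k / Real.sqrt (2*π)) / (k.factorial:ℝ)
        * Real.exp (τ/δ) := by
        have : (0:ℝ) ≤ Real.exp (τ/δ) := (Real.exp_pos _).le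
        gcongr
    _ = (Real.sqrt (2*π))⁻¹ * (C*δ*Real.exp 1)^k * Real.exp (τ/δ) := by
        rw [mul_pow, mul_pow]
        field_simp

lemma dg_geom_le (q : ℝ) (h0 : 0 ≤ q) (h1 : q < 1) (n : ℕ) :
    ∑ k ∈ Finset.range n, q^k ≤ (1-q)⁻¹ := by
  rw [← tsum_geometric_of_lt_one h0 h1]
  exact Summable.sum_le_tsum _ (fun i _ => by positivity) (summable_geometric_of_lt_one h0 h1)

/-- Delayed Gronwall inequality (Proposition 2 of the paper). -/
theorem delayed_gronwall (ζ : ℝ → ℝ) (δ A C : ℝ)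
    (hζc : ContinuousOn ζ (Set.Ici 0))
    (hζb : ∃ M, ∀ τ ∈ Set.Ici (0:ℝ), |ζ τ| ≤ M)
    (hζpos : ∀ τ ∈ Set.Ici (0:ℝ), 0 < ζ τ)
    (hδ : 0 < δ) (hA : 0 < A) (hC : 0 < C)
    (hineq : ∀ τ > (0:ℝ), ζ τ ≤ A + C * ∫ s in (0:ℝ)..τ, ζ (s + δ))
    (hsmall : C * δ * Real.exp 1 < 1) :
    ∀ τ ∈ Set.Ici (0:ℝ),
      ζ τ ≤ A * (1 + (2 * π) ^ (-(1:ℝ)/2) * (1 - C * δ * Real.exp 1)⁻¹ *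
        Real.exp (τ / δ)) := by
  obtain ⟨M, hM⟩ := hζb
  have hM0 : 0 < M :=
    lt_of_lt_of_le (hζpos 0 (Set.mem_Ici.mpr le_rfl)) (le_trans (le_abs_self _) (hM 0 (Set.mem_Ici.mpr le_rfl)))
  -- integrability of the shifted function
  have hint : ∀ b : ℝ, 0 ≤ b → IntervalIntegrable (fun s => ζ (s + δ)) volume 0 b := by
    intro b hb
    apply ContinuousOn.intervalIntegrable
    apply hζc.comp (Continuous.continuousOn (continuous_id.add continuous_const))
    intro s hs
    rw [Set.uIcc_of_le hb] at hs
    have := hs.1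
    simp only [Set.mem_Ici, Pi.add_apply, id_eq]
    linarith [hδ.le]
  -- bound at 0
  have hz0 : ζ 0 ≤ A := by
    have tend : Filter.Tendsto ζ (nhdsWithin 0 (Set.Ioi 0)) (nhds (ζ 0)) :=
      (hζc 0 (Set.mem_Ici.mpr le_rfl)).mono_left (nhdsWithin_mono 0 Set.Ioi_subset_Ici_self)
    have tend2 : Filter.Tendsto (fun τ => A + C * (M * τ)) (nhdsWithin 0 (Set.Ioi 0))
        (nhds (A + C * (M * 0))) := by
      apply Filter.Tendsto.mono_left _ nhdsWithin_le_nhds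
      exact (continuous_const.add (continuous_const.mul
        (continuous_const.mul continuous_id))).tendsto 0
    have hev : ∀ᶠ τ in nhdsWithin 0 (Set.Ioi 0), ζ τ ≤ A + C * (M * τ) := by
      filter_upwards [self_mem_nhdsWithin] with τ hτ
      have hτ' : (0:ℝ) < τ := hτ
      refine (hineq τ hτ').trans ?_
      gcongr
      have hnorm : ∀ s ∈ Set.uIoc (0:ℝ) τ, ‖ζ (s + δ)‖ ≤ M := by
        intro s hs
        rw [Set.uIoc_of_le hτ'.le] at hs
        exact hM (s + δ) (by simp only [Set.mem_Ici]; linarith [hs.1, hδ.le])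
      have := intervalIntegral.norm_integral_le_of_norm_le_const hnorm
      have habs : |τ - 0| = τ := by rw [sub_zero, abs_of_pos hτ']
      rw [habs] at this
      calc (∫ s in (0:ℝ)..τ, ζ (s + δ)) ≤ ‖∫ s in (0:ℝ)..τ, ζ (s + δ)‖ := le_abs_self _
        _ ≤ M * τ := this
    have := le_of_tendsto_of_tendsto tend tend2 hev
    simpa using this
  -- the main induction
  have key : ∀ n : ℕ, ∀ τ : ℝ, 0 ≤ τ →
      ζ τ ≤ ∑ k ∈ Finset.range (n+1),
        (if k = n then M else A) * C^k / (k.factorial : ℝ) * (τ + k*δ)^k := by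
    intro n
    induction n with
    | zero =>
      intro τ hτ
      simpa using le_trans (le_abs_self _) (hM τ hτ)
    | succ n ih =>
      intro τ hτ
      have hterm_nonneg : ∀ k : ℕ, ∀ x : ℝ, 0 ≤ x →
          0 ≤ (if k = n+1 then M else A) * C^k / (k.factorial : ℝ) * (x + k*δ)^k := by
        intro k x hx
        have h1 : (0:ℝ) ≤ (if k = n+1 then M else A) := by split_ifs; exacts [hM0.le, hA.le]
        have h2 : (0:ℝ) ≤ x + k*δ := by positivity
        positivity
      rcases eq_or_lt_of_le hτ with h0 | h0
      · -- τ = 0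
        rw [← h0]
        refine hz0.trans ?_
        have h00 : (fun k => (if k = n+1 then M else A) * C^k / (k.factorial : ℝ)
            * ((0:ℝ) + k*δ)^k) 0 ≤ ∑ k ∈ Finset.range (n+2),
            (if k = n+1 then M else A) * C^k / (k.factorial : ℝ) * ((0:ℝ) + k*δ)^k :=
          Finset.single_le_sum (f := fun k => (if k = n+1 then M else A) * C^k
            / (k.factorial : ℝ) * ((0:ℝ) + k*δ)^k)
            (fun k _ => hterm_nonneg k 0 le_rfl) (by simp)
        simpa using h00
      · -- τ > 0
        have hbound : ∀ s ∈ Set.Icc (0:ℝ) τ, ζ (s+δ) ≤ ∑ k ∈ Finset.range (n+1),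
            (if k = n then M else A) * C^k / (k.factorial : ℝ) * ((s+δ) + k*δ)^k := by
          intro s hs
          exact ih (s+δ) (by linarith [hs.1, hδ.le])
        have hcont : ∀ k : ℕ, IntervalIntegrable
            (fun s => (if k = n then M else A) * C^k / (k.factorial : ℝ) * ((s+δ) + k*δ)^k)
            volume 0 τ := by
          intro k
          exact (continuous_const.mul
            (((continuous_id.add continuous_const).add continuous_const).pow k)).intervalIntegrable _ _
        have hints : IntervalIntegrable (fun s => ∑ k ∈ Finset.range (n+1),
            (if k = n then M else A) * C^k / (k.factorial : ℝ) * ((s+δ) + k*δ)^k)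
            volume 0 τ := by
          exact (continuous_finset_sum _ (fun k _ => continuous_const.mul
            (((continuous_id.add continuous_const).add
              continuous_const).pow k))).intervalIntegrable _ _
        have h1 : (∫ s in (0:ℝ)..τ, ζ (s+δ)) ≤ ∫ s in (0:ℝ)..τ,
            ∑ k ∈ Finset.range (n+1),
              (if k = n then M else A) * C^k / (k.factorial : ℝ) * ((s+δ) + k*δ)^k :=
          intervalIntegral.integral_mono_on h0.le (hint τ hτ) hints hbound
        have h2 : (∫ s in (0:ℝ)..τ, ∑ k ∈ Finset.range (n+1),
              (if k = n then M else A) * C^k / (k.factorial : ℝ) * ((s+δ) + k*δ)^k)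
            = ∑ k ∈ Finset.range (n+1), (if k = n then M else A) * C^k / (k.factorial : ℝ)
              * (((τ + (δ + k*δ))^(k+1) - (δ + k*δ)^(k+1))/(k+1)) := by
          rw [intervalIntegral.integral_finset_sum (fun k _ => hcont k)]
          apply Finset.sum_congr rfl
          intro k _
          rw [intervalIntegral.integral_const_mul]
          congr 1
          have : ∀ s : ℝ, (s+δ) + k*δ = s + (δ + k*δ) := by intro s; ring
          simp_rw [this]
          rw [intervalIntegral.integral_comp_add_right (fun x => x^k) (δ + k*δ), integral_pow]
          norm_num
        have h3 : ζ τ ≤ A + C * ∑ k ∈ Finset.range (n+1),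
            (if k = n then M else A) * C^k / (k.factorial : ℝ)
              * (((τ + (δ + k*δ))^(k+1) - (δ + k*δ)^(k+1))/(k+1)) := by
          refine (hineq τ h0).trans ?_
          rw [← h2]
          gcongr
        refine h3.trans ?_
        rw [Finset.sum_range_succ' (fun k => (if k = n+1 then M else A) * C^k
          / (k.factorial : ℝ) * (τ + k*δ)^k) (n+1)]
        have hzero : (if 0 = n+1 then M else A) * C^0 / ((0:ℕ).factorial : ℝ)
            * (τ + ((0:ℕ):ℝ)*δ)^0 = A := by simp
        rw [hzero]
        have hmain : C * ∑ k ∈ Finset.range (n+1),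
            (if k = n then M else A) * C^k / (k.factorial : ℝ)
              * (((τ + (δ + k*δ))^(k+1) - (δ + k*δ)^(k+1))/(k+1))
            ≤ ∑ k ∈ Finset.range (n+1), (if k+1 = n+1 then M else A) * C^(k+1)
              / ((k+1).factorial : ℝ) * (τ + ((k+1:ℕ):ℝ)*δ)^(k+1) := by
          rw [Finset.mul_sum]
          apply Finset.sum_le_sum
          intro k _
          have hck : (0:ℝ) ≤ (if k = n then M else A) := by
            split_ifs
            exacts [hM0.le, hA.le]
          have hif : (if k+1 = n+1 then M else A) = (if k = n then M else A) := by
            simp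
          have hbase : τ + ((k+1:ℕ):ℝ)*δ = τ + (δ + (k:ℝ)*δ) := by push_cast; ring
          rw [hif, hbase]
          have hfk : (0:ℝ) < (k.factorial : ℝ) := by exact_mod_cast k.factorial_pos
          have hkk : (0:ℝ) < (k:ℝ) + 1 := by positivity
          have hYp : (0:ℝ) ≤ (δ + (k:ℝ)*δ)^(k+1) := by positivity
          have e1 : ((τ + (δ + (k:ℝ)*δ))^(k+1) - (δ + (k:ℝ)*δ)^(k+1))/((k:ℝ)+1)
              ≤ (τ + (δ + (k:ℝ)*δ))^(k+1)/((k:ℝ)+1) := by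
            gcongr
            linarith
          calc C * ((if k = n then M else A) * C^k / (k.factorial : ℝ)
                * (((τ + (δ + (k:ℝ)*δ))^(k+1) - (δ + (k:ℝ)*δ)^(k+1))/((k:ℝ)+1)))
              ≤ C * ((if k = n then M else A) * C^k / (k.factorial : ℝ)
                * ((τ + (δ + (k:ℝ)*δ))^(k+1)/((k:ℝ)+1))) := by
                apply mul_le_mul_of_nonneg_left _ hC.le
                apply mul_le_mul_of_nonneg_left e1 (by positivity)
            _ = (if k = n then M else A) * C^(k+1) / ((k+1).factorial : ℝ)
                * (τ + (δ + (k:ℝ)*δ))^(k+1) := by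
                have hfc : ((k+1).factorial : ℝ) = ((k:ℝ)+1) * (k.factorial : ℝ) := by
                  rw [Nat.factorial_succ]; push_cast; ring
                rw [hfc]
                field_simp
                ring_nf
        linarith
  -- final limiting argument
  intro τ hτmem
  have hτ' : (0:ℝ) ≤ τ := hτmem
  set q := C * δ * Real.exp 1 with hqdef
  have hq0 : 0 < q := by positivity
  have hq1 : q < 1 := hsmall
  have h1q : 0 < 1 - q := by linarith
  set P := (2*π) ^ (-(1:ℝ)/2) with hPdef
  have hP0 : 0 < P := by rw [hPdef, dg_two_pi_rpow]; positivity
  have hexp0 : 0 < Real.exp (τ/δ) := Real.exp_pos _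
  have claim : ∀ n : ℕ, ζ τ ≤ A * (1 + P * (1-q)⁻¹ * Real.exp (τ/δ))
      + M * (P * Real.exp (τ/δ)) * q^(n+1) := by
    intro n
    have hkey := key (n+1) τ hτ'
    rw [Finset.sum_range_succ] at hkey
    have hlast : (if n+1 = n+1 then M else A) * C^(n+1) / ((n+1).factorial : ℝ)
        * (τ + ((n+1:ℕ):ℝ)*δ)^(n+1) ≤ M * (P * Real.exp (τ/δ)) * q^(n+1) := by
      rw [if_pos rfl]
      have hb := dg_term_bound C δ τ hC hδ hτ' (n+1) (Nat.le_add_left 1 n)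
      rw [← hqdef, ← hPdef] at hb
      calc M * C^(n+1) / ((n+1).factorial:ℝ) * (τ + ((n+1:ℕ):ℝ)*δ)^(n+1)
          = M * (C^(n+1) / ((n+1).factorial:ℝ) * (τ + ((n+1:ℕ):ℝ)*δ)^(n+1)) := by ring
        _ ≤ M * (P * q^(n+1) * Real.exp (τ/δ)) := mul_le_mul_of_nonneg_left hb hM0.le
        _ = M * (P * Real.exp (τ/δ)) * q^(n+1) := by ring
    have hfront : ∑ k ∈ Finset.range (n+1), (if k = n+1 then M else A) * C^k
        / (k.factorial : ℝ) * (τ + (k:ℝ)*δ)^k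
        ≤ A * (1 + P * (1-q)⁻¹ * Real.exp (τ/δ)) := by
      rw [Finset.sum_range_succ' (fun k => (if k = n+1 then M else A) * C^k
        / (k.factorial : ℝ) * (τ + (k:ℝ)*δ)^k) n]
      have hzero : (if 0 = n+1 then M else A) * C^0 / ((0:ℕ).factorial : ℝ)
          * (τ + ((0:ℕ):ℝ)*δ)^0 = A := by simp
      have hterms : ∀ k ∈ Finset.range n, (if k+1 = n+1 then M else A) * C^(k+1)
          / ((k+1).factorial : ℝ) * (τ + ((k+1:ℕ):ℝ)*δ)^(k+1)
          ≤ A * (P * Real.exp (τ/δ)) * q^(k+1) := by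
        intro k hk
        rw [Finset.mem_range] at hk
        rw [if_neg (by omega)]
        have hb := dg_term_bound C δ τ hC hδ hτ' (k+1) (Nat.le_add_left 1 k)
        rw [← hqdef, ← hPdef] at hb
        calc A * C^(k+1) / ((k+1).factorial:ℝ) * (τ + ((k+1:ℕ):ℝ)*δ)^(k+1)
            = A * (C^(k+1) / ((k+1).factorial:ℝ) * (τ + ((k+1:ℕ):ℝ)*δ)^(k+1)) := by ring
          _ ≤ A * (P * q^(k+1) * Real.exp (τ/δ)) := mul_le_mul_of_nonneg_left hb hA.le
          _ = A * (P * Real.exp (τ/δ)) * q^(k+1) := by ring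
      have hsum : ∑ k ∈ Finset.range n, (if k+1 = n+1 then M else A) * C^(k+1)
          / ((k+1).factorial : ℝ) * (τ + ((k+1:ℕ):ℝ)*δ)^(k+1)
          ≤ A * (P * Real.exp (τ/δ)) * (1-q)⁻¹ := by
        calc ∑ k ∈ Finset.range n, (if k+1 = n+1 then M else A) * C^(k+1)
            / ((k+1).factorial : ℝ) * (τ + ((k+1:ℕ):ℝ)*δ)^(k+1)
            ≤ ∑ k ∈ Finset.range n, A * (P * Real.exp (τ/δ)) * q^(k+1) :=
              Finset.sum_le_sum hterms
          _ = (A * (P * Real.exp (τ/δ)) * q) * ∑ k ∈ Finset.range n, q^k := by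
              rw [Finset.mul_sum]
              apply Finset.sum_congr rfl
              intro k _
              rw [pow_succ]
              ring
          _ ≤ (A * (P * Real.exp (τ/δ)) * q) * (1-q)⁻¹ := by
              apply mul_le_mul_of_nonneg_left (dg_geom_le q hq0.le hq1 n) (by positivity)
          _ ≤ A * (P * Real.exp (τ/δ)) * (1-q)⁻¹ := by
              have hinv : (0:ℝ) ≤ (1-q)⁻¹ := by positivity
              apply mul_le_mul_of_nonneg_right _ hinv
              nlinarith [mul_pos (mul_pos hA hP0) hexp0]
      rw [hzero]
      calc (∑ k ∈ Finset.range n, (if k+1 = n+1 then M else A) * C^(k+1)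
          / ((k+1).factorial : ℝ) * (τ + ((k+1:ℕ):ℝ)*δ)^(k+1)) + A
          ≤ A * (P * Real.exp (τ/δ)) * (1-q)⁻¹ + A := by linarith
        _ = A * (1 + P * (1-q)⁻¹ * Real.exp (τ/δ)) := by ring
    calc ζ τ ≤ _ := hkey
      _ ≤ A * (1 + P * (1-q)⁻¹ * Real.exp (τ/δ)) + M * (P * Real.exp (τ/δ)) * q^(n+1) := by
          exact add_le_add hfront hlast
  have hlim : Filter.Tendsto (fun n : ℕ => A * (1 + P * (1-q)⁻¹ * Real.exp (τ/δ))
      + M * (P * Real.exp (τ/δ)) * q^(n+1)) Filter.atTop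
      (nhds (A * (1 + P * (1-q)⁻¹ * Real.exp (τ/δ)) + M * (P * Real.exp (τ/δ)) * 0)) := by
    apply Filter.Tendsto.const_add
    apply Filter.Tendsto.const_mul
    exact (tendsto_pow_atTop_nhds_zero_of_lt_one hq0.le hq1).comp
      (Filter.tendsto_add_atTop_nat 1)
  have hfin := ge_of_tendsto' hlim claim
  simpa using hfin
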